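/- Let α₀ = (688 − 480√2)/49. Then 0 < α₀ < 1/2, and for every real α with 0 < α < 1/2 one has: 2√α + 4√(1+α) < 4 + 2√(2α) if and only if α < α₀, and 2√α + 4√(1+α) = 4 + 2√(2α) if and only if α = α₀. -/
import Mathlib


/-- **The critical ratio.** `α₀ = (688 − 480√2)/49` satisfies `0 < α₀ < 1/2`, and for
`0 < α < 1/2` the embedded-rectangle perimeter `2√α + 4√(1+α)` is smaller than the
kissing-rectangles perimeter `4 + 2√(2α)` exactly when `α < α₀`, with equality exactly
at `α = α₀`. -/
theorem critical_ratio_comparison :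
    (0 < (688 - 480 * Real.sqrt 2) / 49 ∧ (688 - 480 * Real.sqrt 2) / 49 < 1 / 2) ∧
      ∀ α : ℝ, 0 < α → α < 1 / 2 →
        ((2 * Real.sqrt α + 4 * Real.sqrt (1 + α) < 4 + 2 * Real.sqrt (2 * α) ↔
            α < (688 - 480 * Real.sqrt 2) / 49) ∧
          (2 * Real.sqrt α + 4 * Real.sqrt (1 + α) = 4 + 2 * Real.sqrt (2 * α) ↔
            α = (688 - 480 * Real.sqrt 2) / 49)) := by
  have hs : Real.sqrt 2 ^ 2 = 2 := Real.sq_sqrt (by norm_num)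
  set s := Real.sqrt 2 with hsdef
  have hs0 : 0 < s := Real.sqrt_pos.mpr (by norm_num)
  have hs1 : 1.414 < s := by nlinarith
  have hs2 : s < 1.415 := by nlinarith
  set c : ℝ := (20 - 12 * s) / 7 with hcdef
  have hc0 : 0 < c := by rw [hcdef]; linarith
  have hcid : (4 + 8 * s) * c = 16 * (s - 1) := by
    rw [hcdef]; linear_combination (-96 / 7 : ℝ) * hs
  have hα0 : (688 - 480 * s) / 49 = c ^ 2 := by
    rw [hcdef]; linear_combination (-144 / 49 : ℝ) * hs
  refine ⟨⟨by linarith, by linarith⟩, ?_⟩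
  intro α hα hα2
  have ha0 : 0 < Real.sqrt α := Real.sqrt_pos.mpr hα
  have ha : Real.sqrt α ^ 2 = α := Real.sq_sqrt hα.le
  set a := Real.sqrt α with hadef
  have hb0 : 0 < Real.sqrt (1 + α) := Real.sqrt_pos.mpr (by linarith)
  have hb : Real.sqrt (1 + α) ^ 2 = 1 + α := Real.sq_sqrt (by linarith)
  set b := Real.sqrt (1 + α) with hbdef
  have ht : Real.sqrt (2 * α) = s * a := by
    rw [hadef, hsdef, ← Real.sqrt_mul (by norm_num : (0:ℝ) ≤ 2)]
  rw [ht, hα0]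
  have hb2 : b ^ 2 = 1 + a ^ 2 := by rw [hb, ← ha]
  have hR0 : 0 < 4 + 2 * (s - 1) * a := by
    nlinarith [mul_pos (show (0:ℝ) < s - 1 by linarith) ha0]
  have hRb0 : 0 < 4 + 2 * (s - 1) * a + 4 * b := by linarith
  -- trichotomy for the perimeters
  have Plt : a < c → 2 * a + 4 * b < 4 + 2 * (s * a) := by
    intro h
    have h1 : 0 < 16 * (s - 1) - (4 + 8 * s) * a := by
      have := mul_lt_mul_of_pos_left h (show (0:ℝ) < 4 + 8 * s by linarith)
      linarith [hcid]
    have key : 4 * (s - 1) ^ 2 * a ^ 2 = (12 - 8 * s) * a ^ 2 := by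
      linear_combination (4 * a ^ 2) * hs
    have h3 : 16 * b ^ 2 < (4 + 2 * (s - 1) * a) ^ 2 := by
      linarith [mul_pos ha0 h1, hb2, key]
    have h4 : 4 * b < 4 + 2 * (s - 1) * a := by
      by_contra h'
      push_neg at h'
      have h6 := mul_self_le_mul_self hR0.le h'
      linarith [h6, h3]
    linarith
  have Pgt : c < a → 4 + 2 * (s * a) < 2 * a + 4 * b := by
    intro h
    have h1 : 0 < (4 + 8 * s) * a - 16 * (s - 1) := by
      have := mul_lt_mul_of_pos_left h (show (0:ℝ) < 4 + 8 * s by linarith)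
      linarith [hcid]
    have key : 4 * (s - 1) ^ 2 * a ^ 2 = (12 - 8 * s) * a ^ 2 := by
      linear_combination (4 * a ^ 2) * hs
    have h3 : (4 + 2 * (s - 1) * a) ^ 2 < 16 * b ^ 2 := by
      linarith [mul_pos ha0 h1, hb2, key]
    have h4 : 4 + 2 * (s - 1) * a < 4 * b := by
      by_contra h'
      push_neg at h'
      have h6 := mul_self_le_mul_self (by positivity : (0:ℝ) ≤ 4 * b) h'
      linarith [h6, h3]
    linarith
  have Peq : a = c → 2 * a + 4 * b = 4 + 2 * (s * a) := by
    intro h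
    have h3 : (4 * b) ^ 2 = (4 + 2 * (s - 1) * a) ^ 2 := by
      linear_combination 16 * hb2 + (-4 * a ^ 2) * hs + ((4 + 8 * s) * a) * h + a * hcid
    have h4 : (4 * b - (4 + 2 * (s - 1) * a)) * (4 * b + (4 + 2 * (s - 1) * a)) = 0 := by
      linear_combination h3
    rcases mul_eq_zero.mp h4 with h5 | h5
    · linarith
    · linarith
  -- trichotomy for the areas
  have Mlt : a < c → α < c ^ 2 := by
    intro h; nlinarith [ha, h, ha0, hc0]
  have Mgt : c < a → c ^ 2 < α := by
    intro h; nlinarith [ha, h, ha0, hc0]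
  have Meq : a = c → α = c ^ 2 := by
    intro h; rw [← ha, h]
  constructor
  · constructor
    · intro h
      rcases lt_trichotomy a c with h' | h' | h'
      · exact Mlt h'
      · exact absurd (Peq h') (by linarith)
      · exact absurd (Pgt h') (by linarith)
    · intro h
      rcases lt_trichotomy a c with h' | h' | h'
      · exact Plt h'
      · have := Meq h'; linarith
      · have := Mgt h'; linarith
  · constructor
    · intro h
      rcases lt_trichotomy a c with h' | h' | h'
      · have := Plt h'; linarith
      · exact Meq h'
      · have := Pgt h'; linarith
    · intro h
      rcases lt_trichotomy a c with h' | h' | h'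
      · have := Mlt h'; linarith
      · exact Peq h'
      · have := Mgt h'; linarith
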